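/- arXiv:2405.03676 — 2 statements merged into one kernel-verified Lean document; each statement's English description precedes it below -/
import Mathlib

section
/- For the logistic sigmoid σ(t) = 1/(1+exp(-t)), if z1 < z2 and C > 0, then σ(-z1 + C)/σ(-z1) < σ(-z2 + C)/σ(-z2). That is, among two points, the one with smaller incorrect-class margin-loss (larger correct margin z) receives a strictly larger multiplicative up-weighting of its gradient under SAM's constant logit adjustment. -/
noncomputable def sigmoid (t : ℝ) : ℝ := 1 / (1 + Real.exp (-t))

/-- If `z1 < z2` and `C > 0`, then `σ(-z1 + C)/σ(-z1) < σ(-z2 + C)/σ(-z2)`: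
the point with larger correct margin receives a strictly larger multiplicative
up-weighting under SAM's constant logit adjustment. -/
theorem stmt2 (C : ℝ) (hC : 0 < C) (z1 z2 : ℝ) (h : z1 < z2) :
    sigmoid (-z1 + C) / sigmoid (-z1) < sigmoid (-z2 + C) / sigmoid (-z2) := by
  unfold sigmoid
  simp only [one_div, inv_div_inv]
  have p1 : (0:ℝ) < 1 + Real.exp (-(-z1 + C)) := by positivity
  have p2 : (0:ℝ) < 1 + Real.exp (-(-z2 + C)) := by positivity
  rw [div_lt_div_iff₀ p1 p2]
  have h1 : Real.exp (-(-z1 + C)) = Real.exp (-(-z1)) * Real.exp (-C) := by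
    rw [← Real.exp_add]; ring_nf
  have h2 : Real.exp (-(-z2 + C)) = Real.exp (-(-z2)) * Real.exp (-C) := by
    rw [← Real.exp_add]; ring_nf
  have hez : Real.exp (-(-z1)) < Real.exp (-(-z2)) := by
    apply Real.exp_lt_exp.2; linarith
  have hc : Real.exp (-C) < 1 := by
    rw [Real.exp_lt_one_iff]; linarith
  nlinarith [Real.exp_pos (-(-z1)), Real.exp_pos (-(-z2)), Real.exp_pos (-C)]
end

section
/- For a linear model with logistic loss, the ratio of the norm of the 1-SAM gradient to the norm of the SGD gradient for a sample (x,t) equals σ(-t⟨w,x⟩ + ρ‖x‖)/σ(-t⟨w,x⟩). -/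
open RealInnerProductSpace

lemma sigmoid_pos (t : ℝ) : 0 < sigmoid t := by
  unfold sigmoid
  positivity

/-- For a linear model with logistic loss, the ratio of the norm of the 1-SAM
gradient `-t σ(-t⟨w,x⟩ + ρ‖x‖) x` to the norm of the SGD gradient
`-t σ(-t⟨w,x⟩) x` equals `σ(-t⟨w,x⟩ + ρ‖x‖)/σ(-t⟨w,x⟩)`. -/
theorem stmt6 (d : ℕ) (w x : EuclideanSpace ℝ (Fin d)) (hx : x ≠ 0)
    (t : ℝ) (ht : t = 1 ∨ t = -1) (ρ : ℝ) (hρ : 0 < ρ) :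
    ‖(-(t * sigmoid (-(t * ⟪w, x⟫) + ρ * ‖x‖))) • x‖ /
      ‖(-(t * sigmoid (-(t * ⟪w, x⟫)))) • x‖ =
    sigmoid (-(t * ⟪w, x⟫) + ρ * ‖x‖) / sigmoid (-(t * ⟪w, x⟫)) := by
  have ht1 : |t| = 1 := by rcases ht with h | h <;> simp [h]
  have h1 := sigmoid_pos (-(t * ⟪w, x⟫) + ρ * ‖x‖)
  have h2 := sigmoid_pos (-(t * ⟪w, x⟫))
  have hxn : ‖x‖ ≠ 0 := norm_ne_zero_iff.mpr hx
  rw [norm_smul, norm_smul]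
  simp only [Real.norm_eq_abs, abs_neg, abs_mul, ht1, one_mul,
    abs_of_pos h1, abs_of_pos h2]
  rw [mul_div_mul_right _ _ hxn]
end
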